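/- Let r > 1 and let f be holomorphic on the annulus 𝔸_r with Laurent expansion f(z) = Σ_{n ∈ ℤ} a_n zⁿ (summable for each z ∈ 𝔸_r). Then for every z ∈ 𝔸_r for which Σ_{n ∈ ℤ} |z|^{2n}/I_n(r) converges, one has |f(z)| ≤ (1/√(2π)) · (∬_{𝔸_r} (1 − |w|²)² |f(w)|² dA(w))^{1/2} · (Σ_{n ∈ ℤ} |z|^{2n}/I_n(r))^{1/2}. -/

import Mathlib

open MeasureTheory Complex Metric

/-- The annulus `𝔸_r = {z : 1 < |z| < r}`. -/
def annulus (r : ℝ) : Set ℂ := {z : ℂ | 1 < ‖z‖ ∧ ‖z‖ < r}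

/-- `I_n(r) = (1/2) ∫_1^{r²} ρⁿ (1-ρ)² dρ`. -/
noncomputable def laurentI (n : ℤ) (r : ℝ) : ℝ :=
  (1 / 2) * ∫ ρ in (1:ℝ)..(r ^ 2), ρ ^ n * (1 - ρ) ^ 2

/-!
The monomials `wⁿ` (`n ∈ ℤ`) are orthogonal in `L²` of a closed annulus `t ≤ |w| ≤ s` for the
weight `(1 - |w|²)²`, with `‖wⁿ‖² = 2π (Iₙ(s) - Iₙ(t))` (polar coordinates and the substitution
`u = ρ²`). The Laurent series converges uniformly there, so integrating it term by term
gives `⟨f, wⁿ⟩ = aₙ ‖wⁿ‖²`, and Bessel's inequality gives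
`2π ∑ |aₙ|² (Iₙ(s) - Iₙ(t)) ≤ ∬ (1 - |w|²)² |f|²`. Letting `t → 1` and `s → r` yields
`2π ∑ |aₙ|² Iₙ(r) ≤ ∬_{𝔸_r} (1 - |w|²)² |f|²`, and the bound follows from
`|f(z)| ≤ ∑ (|aₙ| √Iₙ) (|z|ⁿ / √Iₙ)` and Cauchy–Schwarz.
-/

open Set Filter Topology ComplexConjugate
open scoped Real

section Radial

lemma continuousOn_zpow_mul_one_sub_sq (n : ℤ) :
    ContinuousOn (fun ρ : ℝ => ρ ^ n * (1 - ρ) ^ 2) (Ioi 0) :=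
  (continuousOn_id.zpow₀ n fun _ hρ => Or.inl (ne_of_gt hρ)).mul (by fun_prop)

lemma intervalIntegrable_zpow_mul_one_sub_sq (n : ℤ) {a b : ℝ} (ha : 0 < a) (hb : 0 < b) :
    IntervalIntegrable (fun ρ : ℝ => ρ ^ n * (1 - ρ) ^ 2) volume a b :=
  ((continuousOn_zpow_mul_one_sub_sq n).mono fun _ hρ =>
    lt_of_lt_of_le (lt_min ha hb) hρ.1).intervalIntegrable

lemma laurentI_one (n : ℤ) : laurentI n 1 = 0 := by
  simp [laurentI]

lemma laurentI_pos (n : ℤ) {r : ℝ} (hr : 1 < r) : 0 < laurentI n r := by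
  have hr2 : 1 < r ^ 2 := one_lt_pow₀ hr two_ne_zero
  have hpos : 0 < ∫ ρ in (1:ℝ)..(r ^ 2), ρ ^ n * (1 - ρ) ^ 2 :=
    intervalIntegral.intervalIntegral_pos_of_pos_on
      (intervalIntegrable_zpow_mul_one_sub_sq n one_pos (by positivity))
      (fun ρ hρ => mul_pos (zpow_pos (by linarith [hρ.1]) n) (by nlinarith [hρ.1])) hr2
  unfold laurentI; positivity

lemma continuousAt_laurentI (n : ℤ) {r : ℝ} (hr : 0 < r) : ContinuousAt (laurentI n) r := by
  have hr2 : 0 < r ^ 2 := by positivity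
  have hprim : ContinuousAt (fun x => ∫ ρ in (1:ℝ)..x, ρ ^ n * (1 - ρ) ^ 2) (r ^ 2) :=
    (intervalIntegral.integral_hasDerivAt_right
      (intervalIntegrable_zpow_mul_one_sub_sq n one_pos hr2)
      ((continuousOn_zpow_mul_one_sub_sq n).stronglyMeasurableAtFilter isOpen_Ioi _ hr2)
      ((continuousOn_zpow_mul_one_sub_sq n).continuousAt (Ioi_mem_nhds hr2))).continuousAt
  exact continuousAt_const.mul (hprim.comp (f := fun x : ℝ => x ^ 2) (continuousAt_id.pow 2))

lemma setIntegral_Icc_eq_laurentI_sub (n : ℤ) {t s : ℝ} (ht : 0 < t) (hts : t ≤ s) :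
    ∫ ρ in Icc t s, (ρ ^ 2) ^ n * (1 - ρ ^ 2) ^ 2 * ρ = laurentI n s - laurentI n t := by
  have hsub : ∫ ρ in t..s, (ρ ^ 2) ^ n * (1 - ρ ^ 2) ^ 2 * (2 * ρ)
      = ∫ u in t ^ 2..s ^ 2, u ^ n * (1 - u) ^ 2 :=
    intervalIntegral.integral_comp_mul_deriv' (f := fun ρ => ρ ^ 2)
      (g := fun u => u ^ n * (1 - u) ^ 2)
      (fun ρ _ => by simpa using hasDerivAt_pow 2 ρ) (by fun_prop)
      ((continuousOn_zpow_mul_one_sub_sq n).mono <| by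
        rintro _ ⟨ρ, hρ, rfl⟩
        rw [uIcc_of_le hts] at hρ
        exact pow_pos (ht.trans_le hρ.1) 2)
  have hs : 0 < s := ht.trans_le hts
  rw [laurentI, laurentI, ← mul_sub, intervalIntegral.integral_interval_sub_left
      (intervalIntegrable_zpow_mul_one_sub_sq n one_pos (by positivity))
      (intervalIntegrable_zpow_mul_one_sub_sq n one_pos (by positivity)),
    ← hsub, integral_Icc_eq_integral_Ioc, ← intervalIntegral.integral_of_le hts,
    ← intervalIntegral.integral_const_mul]
  congr 1 with ρ
  ring

end Radial

def closedAnnulus (t s : ℝ) : Set ℂ := {w : ℂ | t ≤ ‖w‖ ∧ ‖w‖ ≤ s}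

section ClosedAnnulus

variable {t s : ℝ}

lemma isCompact_closedAnnulus : IsCompact (closedAnnulus t s) :=
  (isCompact_closedBall (0 : ℂ) s).of_isClosed_subset
    ((isClosed_le continuous_const continuous_norm).inter
      (isClosed_le continuous_norm continuous_const))
    fun _ hw => mem_closedBall_zero_iff.2 hw.2

lemma measurableSet_closedAnnulus : MeasurableSet (closedAnnulus t s) :=
  isCompact_closedAnnulus.isClosed.measurableSet

lemma closedAnnulus_subset_annulus {r : ℝ} (ht : 1 < t) (hs : s < r) :
    closedAnnulus t s ⊆ annulus r :=
  fun _ hw => ⟨ht.trans_le hw.1, hw.2.trans_lt hs⟩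

lemma ofReal_mem_closedAnnulus {x : ℝ} (hx : 0 ≤ x) (htx : t ≤ x) (hxs : x ≤ s) :
    (x : ℂ) ∈ closedAnnulus t s := by
  simpa [closedAnnulus, abs_of_nonneg hx] using ⟨htx, hxs⟩

lemma ne_zero_of_mem_closedAnnulus (ht : 0 < t) {w : ℂ} (hw : w ∈ closedAnnulus t s) : w ≠ 0 :=
  norm_pos_iff.1 (ht.trans_le hw.1)

lemma continuousOn_zpow_closedAnnulus (ht : 0 < t) (n : ℤ) :
    ContinuousOn (fun w : ℂ => w ^ n) (closedAnnulus t s) :=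
  continuousOn_id.zpow₀ n fun _ hw => Or.inl (ne_zero_of_mem_closedAnnulus ht hw)

lemma continuousOn_conj_zpow_closedAnnulus (ht : 0 < t) (n : ℤ) :
    ContinuousOn (fun w : ℂ => conj w ^ n) (closedAnnulus t s) :=
  continuous_conj.continuousOn.zpow₀ n fun _ hw =>
    Or.inl ((map_ne_zero _).2 (ne_zero_of_mem_closedAnnulus ht hw))

lemma setIntegral_closedAnnulus_eq_polar {E : Type*} [NormedAddCommGroup E] [NormedSpace ℝ E]
    (ht : 0 < t) (F : ℂ → E) :
    ∫ w in closedAnnulus t s, F w =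
      ∫ p in Icc t s ×ˢ Ioo (-π) π, p.1 • F (Complex.polarCoord.symm p) := by
  have hpre : polarCoord.target ∩ Complex.polarCoord.symm ⁻¹' closedAnnulus t s
      = Icc t s ×ˢ Ioo (-π) π := by
    ext ⟨ρ, θ⟩
    simp only [polarCoord_target, mem_inter_iff, mem_prod, mem_Ioi, mem_preimage, closedAnnulus,
      mem_ofPred_eq, Complex.norm_polarCoord_symm, mem_Icc]
    constructor
    · rintro ⟨⟨hρ, hθ⟩, h1, h2⟩
      rw [abs_of_pos hρ] at h1 h2
      exact ⟨⟨h1, h2⟩, hθ⟩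
    · rintro ⟨⟨h1, h2⟩, hθ⟩
      have hρ : 0 < ρ := ht.trans_le h1
      rw [abs_of_pos hρ]
      exact ⟨⟨hρ, hθ⟩, h1, h2⟩
  have hmeas : Measurable Complex.polarCoord.symm := by
    rw [funext Complex.polarCoord_symm_apply]; fun_prop
  rw [← integral_indicator measurableSet_closedAnnulus, ← Complex.integral_comp_polarCoord_symm,
    ← hpre, ← setIntegral_indicator (measurableSet_closedAnnulus.preimage hmeas)]
  congr 1 with p
  by_cases hp : Complex.polarCoord.symm p ∈ closedAnnulus t s
  · rw [indicator_of_mem hp, indicator_of_mem (mem_preimage.2 hp)]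
  · rw [indicator_of_notMem hp, indicator_of_notMem (mt mem_preimage.1 hp), smul_zero]

lemma integral_exp_int_mul_I (k : ℤ) :
    ∫ θ in Ioo (-π) π, Complex.exp (k * θ * I) = if k = 0 then ((2 * π : ℝ) : ℂ) else 0 := by
  rw [← integral_Ioc_eq_integral_Ioo, ← intervalIntegral.integral_of_le (by linarith [Real.pi_pos])]
  split_ifs with hk
  · simp [hk]
    ring
  · have hc : (k : ℂ) * I ≠ 0 := mul_ne_zero (Int.cast_ne_zero.2 hk) I_ne_zero
    have hperiod : Complex.exp (k * I * π) = Complex.exp (k * I * (-π : ℝ)) := by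
      rw [show (k : ℂ) * I * π = k * I * (-π : ℝ) + k * (2 * π * I) by push_cast; ring,
        Complex.exp_add, exp_int_mul_two_pi_mul_I, mul_one]
    simp_rw [mul_right_comm _ _ I]
    rw [integral_exp_mul_complex hc, hperiod, sub_self, zero_div]

end ClosedAnnulus

section Orthogonality

variable {t s : ℝ}

lemma zpow_mul_conj_zpow_polarCoord_symm (m n : ℤ) {ρ : ℝ} (hρ : 0 < ρ) (θ : ℝ) :
    ρ • ((Complex.polarCoord.symm (ρ, θ)) ^ m * conj (Complex.polarCoord.symm (ρ, θ)) ^ n *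
        (((1 - ‖Complex.polarCoord.symm (ρ, θ)‖ ^ 2) ^ 2 : ℝ) : ℂ)) =
      ((ρ ^ m * ρ ^ n * (1 - ρ ^ 2) ^ 2 * ρ : ℝ) : ℂ) * Complex.exp ((m - n : ℤ) * θ * I) := by
  have hsymm : Complex.polarCoord.symm (ρ, θ) = ρ * Complex.exp (θ * I) := by
    simp [Complex.exp_mul_I]
  have hnorm : ‖Complex.polarCoord.symm (ρ, θ)‖ = ρ := by
    rw [Complex.norm_polarCoord_symm, abs_of_pos hρ]
  have hconj : conj (Complex.exp (θ * I)) = Complex.exp (-(θ * I)) := by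
    rw [← Complex.exp_conj, map_mul, conj_ofReal, conj_I, mul_neg]
  rw [hnorm, hsymm, map_mul, conj_ofReal, hconj, mul_zpow, mul_zpow, ← Complex.exp_int_mul,
    ← Complex.exp_int_mul, real_smul]
  have hexp : Complex.exp (m * (θ * I)) * Complex.exp (n * -(θ * I)) =
      Complex.exp ((m - n : ℤ) * θ * I) := by
    rw [← Complex.exp_add]; push_cast; ring_nf
  push_cast at hexp ⊢
  linear_combination ((ρ : ℂ) ^ m * (ρ : ℂ) ^ n * (1 - (ρ : ℂ) ^ 2) ^ 2 * ρ) * hexp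

lemma integral_zpow_mul_conj_zpow (ht : 0 < t) (hts : t ≤ s) (m n : ℤ) :
    ∫ w in closedAnnulus t s, w ^ m * conj w ^ n * (((1 - ‖w‖ ^ 2) ^ 2 : ℝ) : ℂ) =
      if m = n then ((2 * π * (laurentI n s - laurentI n t) : ℝ) : ℂ) else 0 := by
  rw [setIntegral_closedAnnulus_eq_polar ht,
    setIntegral_congr_fun (measurableSet_Icc.prod measurableSet_Ioo)
      fun p hp => zpow_mul_conj_zpow_polarCoord_symm m n (ht.trans_le hp.1.1) p.2,
    Measure.volume_eq_prod, setIntegral_prod_mul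
      (fun ρ : ℝ => ((ρ ^ m * ρ ^ n * (1 - ρ ^ 2) ^ 2 * ρ : ℝ) : ℂ))
      (fun θ : ℝ => Complex.exp ((m - n : ℤ) * θ * I)),
    integral_exp_int_mul_I, integral_complex_ofReal]
  simp only [sub_eq_zero]
  split_ifs with hmn
  · subst hmn
    simp_rw [← mul_zpow, ← sq, setIntegral_Icc_eq_laurentI_sub m ht hts]
    push_cast; ring
  · rw [mul_zero]

end Orthogonality

lemma hasSum_ite_mem_mul_zpow (u : Finset ℤ) (b : ℤ → ℂ) (w : ℂ) :
    HasSum (fun n : ℤ => (if n ∈ u then b n else 0) * w ^ n) (∑ n ∈ u, b n * w ^ n) := by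
  have := hasSum_sum_of_ne_finset_zero (s := u) (L := SummationFilter.unconditional ℤ)
    (f := fun n : ℤ => (if n ∈ u then b n else 0) * w ^ n)
    fun n hn => by rw [if_neg hn, zero_mul]
  rwa [Finset.sum_congr rfl fun n hn => by rw [if_pos hn]] at this

lemma mul_sq_norm_sub_eq (c : ℝ) (x y : ℂ) :
    c * ‖x - y‖ ^ 2 = c * ‖x‖ ^ 2 - (2 * (x * conj y * c) - y * conj y * c).re := by
  simp only [← normSq_eq_norm_sq, normSq_sub, mul_conj, sub_re, mul_re, ofReal_re, ofReal_im,
    re_ofNat, im_ofNat]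
  ring

section LaurentSeries

variable {t s : ℝ} {b : ℤ → ℂ} {h : ℂ → ℂ}

lemma zpow_le_add_zpow {x : ℝ} (ht : 0 < t) (htx : t ≤ x) (hxs : x ≤ s) (m : ℤ) :
    x ^ m ≤ t ^ m + s ^ m := by
  have hx : 0 < x := ht.trans_le htx
  rcases le_or_gt 0 m with hm | hm
  · exact (zpow_le_zpow_left₀ hm hx.le hxs).trans (le_add_of_nonneg_left (zpow_pos ht m).le)
  · have hanti : x ^ m ≤ t ^ m := by
      simpa [zpow_neg] using
        inv_anti₀ (zpow_pos ht _) (zpow_le_zpow_left₀ (neg_nonneg.2 hm.le) ht.le htx)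
    exact hanti.trans (le_add_of_nonneg_right (zpow_pos (ht.trans_le (htx.trans hxs)) m).le)

lemma norm_mul_zpow_le_of_mem_closedAnnulus (ht : 0 < t) {w : ℂ} (hw : w ∈ closedAnnulus t s)
    (c : ℂ) (m : ℤ) : ‖c * w ^ m‖ ≤ ‖c * (t : ℂ) ^ m‖ + ‖c * (s : ℂ) ^ m‖ := by
  simp only [norm_mul, norm_zpow, norm_real, Real.norm_eq_abs, abs_of_pos ht,
    abs_of_pos (ht.trans_le (hw.1.trans hw.2)), ← mul_add]
  exact mul_le_mul_of_nonneg_left (zpow_le_add_zpow ht hw.1 hw.2 m) (norm_nonneg c)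

variable (ht : 0 < t) (hts : t ≤ s)
  (hb : ∀ w ∈ closedAnnulus t s, HasSum (fun n : ℤ => b n * w ^ n) (h w))
include ht hts hb

lemma summable_norm_mul_zpow_add_of_hasSum :
    Summable fun m : ℤ => ‖b m * (t : ℂ) ^ m‖ + ‖b m * (s : ℂ) ^ m‖ :=
  (summable_norm_iff.2 (hb _ (ofReal_mem_closedAnnulus ht.le le_rfl hts)).summable).add
    (summable_norm_iff.2 (hb _ (ofReal_mem_closedAnnulus (ht.le.trans hts) hts le_rfl)).summable)

lemma continuousOn_of_hasSum_closedAnnulus : ContinuousOn h (closedAnnulus t s) := by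
  have hcont : ContinuousOn (fun w => ∑' n : ℤ, b n * w ^ n) (closedAnnulus t s) :=
    continuousOn_tsum (fun m => continuousOn_const.mul (continuousOn_zpow_closedAnnulus ht m))
      (summable_norm_mul_zpow_add_of_hasSum ht hts hb)
      fun m w hw => norm_mul_zpow_le_of_mem_closedAnnulus ht hw (b m) m
  exact hcont.congr fun w hw => (hb w hw).tsum_eq.symm

lemma integrableOn_weight_mul_sq_norm_of_hasSum :
    IntegrableOn (fun w => (1 - ‖w‖ ^ 2) ^ 2 * ‖h w‖ ^ 2) (closedAnnulus t s) :=
  ((by fun_prop : Continuous fun w : ℂ => (1 - ‖w‖ ^ 2) ^ 2).continuousOn.mul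
    ((continuousOn_of_hasSum_closedAnnulus ht hts hb).norm.pow 2)).integrableOn_compact
      isCompact_closedAnnulus

lemma integral_mul_conj_zpow_of_hasSum (n : ℤ) :
    ∫ w in closedAnnulus t s, h w * conj w ^ n * (((1 - ‖w‖ ^ 2) ^ 2 : ℝ) : ℂ) =
      b n * ((2 * π * (laurentI n s - laurentI n t) : ℝ) : ℂ) := by
  set G : ℂ → ℂ := fun w => conj w ^ n * (((1 - ‖w‖ ^ 2) ^ 2 : ℝ) : ℂ)
  have hG : ContinuousOn G (closedAnnulus t s) :=
    (continuousOn_conj_zpow_closedAnnulus ht n).mul (by fun_prop)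
  obtain ⟨C, hC⟩ := isCompact_closedAnnulus.exists_bound_of_continuousOn hG
  have hM := summable_norm_mul_zpow_add_of_hasSum ht hts hb
  have hfin : volume (closedAnnulus t s) ≠ ⊤ := isCompact_closedAnnulus.measure_lt_top.ne
  have hsum : HasSum (fun m : ℤ => ∫ w in closedAnnulus t s, b m * w ^ m * G w)
      (∫ w in closedAnnulus t s, h w * G w) :=
    hasSum_integral_of_dominated_convergence
      (fun m _ => (‖b m * (t : ℂ) ^ m‖ + ‖b m * (s : ℂ) ^ m‖) * C)
      (fun m => ((continuousOn_const.mul (continuousOn_zpow_closedAnnulus ht m)).mul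
        hG).aestronglyMeasurable measurableSet_closedAnnulus)
      (fun m => ae_restrict_of_forall_mem measurableSet_closedAnnulus fun w hw => by
        rw [norm_mul]
        exact mul_le_mul (norm_mul_zpow_le_of_mem_closedAnnulus ht hw (b m) m) (hC w hw)
          (norm_nonneg _) (by positivity))
      (ae_of_all _ fun _ => hM.mul_right C)
      (integrableOn_const hfin)
      (ae_restrict_of_forall_mem measurableSet_closedAnnulus fun w hw =>
        (hb w hw).mul_right (G w))
  have hterm : ∀ m : ℤ, ∫ w in closedAnnulus t s, b m * w ^ m * G w =
      if m = n then b n * ((2 * π * (laurentI n s - laurentI n t) : ℝ) : ℂ) else 0 := by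
    intro m
    calc ∫ w in closedAnnulus t s, b m * w ^ m * G w
        = ∫ w in closedAnnulus t s,
            b m * (w ^ m * conj w ^ n * (((1 - ‖w‖ ^ 2) ^ 2 : ℝ) : ℂ)) := by
          simp only [G, mul_assoc]
      _ = _ := by
          rw [integral_const_mul, integral_zpow_mul_conj_zpow ht hts]
          split_ifs with hmn
          · rw [hmn]
          · rw [mul_zero]
  simp only [hterm] at hsum
  calc _ = ∫ w in closedAnnulus t s, h w * G w := by simp only [G, mul_assoc]
    _ = _ := hsum.unique (hasSum_ite_eq n _)


lemma integral_mul_conj_sum_of_hasSum (a : ℤ → ℂ) (u : Finset ℤ) :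
    ∫ w in closedAnnulus t s,
        h w * conj (∑ m ∈ u, a m * w ^ m) * (((1 - ‖w‖ ^ 2) ^ 2 : ℝ) : ℂ) =
      ∑ m ∈ u, conj (a m) * b m * ((2 * π * (laurentI m s - laurentI m t) : ℝ) : ℂ) := by
  have hpt : ∀ w, h w * conj (∑ m ∈ u, a m * w ^ m) * (((1 - ‖w‖ ^ 2) ^ 2 : ℝ) : ℂ) =
      ∑ m ∈ u, conj (a m) * (h w * conj w ^ m * (((1 - ‖w‖ ^ 2) ^ 2 : ℝ) : ℂ)) := fun w => by
    rw [map_sum, Finset.mul_sum, Finset.sum_mul]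
    exact Finset.sum_congr rfl fun m _ => by rw [map_mul, map_zpow₀]; ring
  simp_rw [hpt]
  rw [integral_finsetSum]
  · refine Finset.sum_congr rfl fun m _ => ?_
    rw [integral_const_mul, integral_mul_conj_zpow_of_hasSum ht hts hb, ← mul_assoc]
  · exact fun m _ => Integrable.const_mul (ContinuousOn.integrableOn_compact
      isCompact_closedAnnulus (((continuousOn_of_hasSum_closedAnnulus ht hts hb).mul
        (continuousOn_conj_zpow_closedAnnulus ht m)).mul (by fun_prop))) _

lemma two_pi_mul_sum_le_integral_of_hasSum (u : Finset ℤ) :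
    2 * π * ∑ n ∈ u, ‖b n‖ ^ 2 * (laurentI n s - laurentI n t) ≤
      ∫ w in closedAnnulus t s, (1 - ‖w‖ ^ 2) ^ 2 * ‖h w‖ ^ 2 := by
  -- Expand `0 ≤ ∫ (1 - |w|²)² |h - g|²` for the partial sum `g`:
  -- both `⟨h, g⟩` and `⟨g, g⟩` equal `Q`.
  set g : ℂ → ℂ := fun w => ∑ n ∈ u, b n * w ^ n
  set Q : ℝ := 2 * π * ∑ n ∈ u, ‖b n‖ ^ 2 * (laurentI n s - laurentI n t)
  have hg : ∀ w, HasSum (fun n : ℤ => (if n ∈ u then b n else 0) * w ^ n) (g w) :=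
    hasSum_ite_mem_mul_zpow u b
  have hQ : ∀ c : ℤ → ℂ, (∀ n ∈ u, c n = b n) →
      ∑ n ∈ u, conj (b n) * c n * ((2 * π * (laurentI n s - laurentI n t) : ℝ) : ℂ) = Q := by
    intro c hc
    rw [Finset.sum_congr rfl fun n hn => by rw [hc n hn, conj_mul']]
    push_cast [Q, Finset.mul_sum]
    exact Finset.sum_congr rfl fun n _ => by ring
  have hhg := integral_mul_conj_sum_of_hasSum ht hts hb b u
  have hgg := integral_mul_conj_sum_of_hasSum ht hts (fun w _ => hg w) b u
  rw [hQ _ fun _ _ => rfl] at hhg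
  rw [hQ _ fun n hn => if_pos hn] at hgg
  have hcont_h := continuousOn_of_hasSum_closedAnnulus ht hts hb
  have hcont_g := continuousOn_of_hasSum_closedAnnulus ht hts fun w _ => hg w
  set F : ℂ → ℂ := fun w => 2 * (h w * conj (g w) * (((1 - ‖w‖ ^ 2) ^ 2 : ℝ) : ℂ)) -
    g w * conj (g w) * (((1 - ‖w‖ ^ 2) ^ 2 : ℝ) : ℂ)
  have hpt : ∀ w, (1 - ‖w‖ ^ 2) ^ 2 * ‖h w - g w‖ ^ 2 =
      (1 - ‖w‖ ^ 2) ^ 2 * ‖h w‖ ^ 2 - (F w).re := fun w =>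
    mul_sq_norm_sub_eq _ _ _
  have hint_h : IntegrableOn (fun w => h w * conj (g w) * (((1 - ‖w‖ ^ 2) ^ 2 : ℝ) : ℂ))
      (closedAnnulus t s) :=
    ((hcont_h.mul (continuous_conj.comp_continuousOn hcont_g)).mul
      (by fun_prop)).integrableOn_compact isCompact_closedAnnulus
  have hint_g : IntegrableOn (fun w => g w * conj (g w) * (((1 - ‖w‖ ^ 2) ^ 2 : ℝ) : ℂ))
      (closedAnnulus t s) :=
    ((hcont_g.mul (continuous_conj.comp_continuousOn hcont_g)).mul
      (by fun_prop)).integrableOn_compact isCompact_closedAnnulus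
  have hint_F : IntegrableOn F (closedAnnulus t s) := (hint_h.const_mul 2).sub hint_g
  have hF : ∫ w in closedAnnulus t s, F w = Q := by
    rw [integral_sub (hint_h.const_mul 2) hint_g, integral_const_mul, hhg, hgg]
    ring
  have hint_re : IntegrableOn (fun w => (F w).re) (closedAnnulus t s) := hint_F.re
  have hre : ∫ w in closedAnnulus t s, (F w).re = (∫ w in closedAnnulus t s, F w).re :=
    integral_re hint_F
  calc Q = (∫ w in closedAnnulus t s, (1 - ‖w‖ ^ 2) ^ 2 * ‖h w‖ ^ 2) -
        ∫ w in closedAnnulus t s, (1 - ‖w‖ ^ 2) ^ 2 * ‖h w - g w‖ ^ 2 := by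
        rw [funext hpt, integral_sub (integrableOn_weight_mul_sq_norm_of_hasSum ht hts hb)
          hint_re, hre, hF, ofReal_re]
        ring
    _ ≤ _ := sub_le_self _ (setIntegral_nonneg measurableSet_closedAnnulus fun _ _ => by positivity)

end LaurentSeries

lemma sum_mul_le_sqrt_mul_sqrt_of_pos {ι : Type*} (u : Finset ι) (p q w : ι → ℝ)
    (hw : ∀ i ∈ u, 0 < w i) :
    ∑ i ∈ u, p i * q i ≤ √(∑ i ∈ u, p i ^ 2 * w i) * √(∑ i ∈ u, q i ^ 2 / w i) := by
  have hcs := Real.sum_mul_le_sqrt_mul_sqrt u (fun i => p i * √(w i)) (fun i => q i / √(w i))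
  have hsq : ∀ i ∈ u, √(w i) ^ 2 = w i := fun i hi => Real.sq_sqrt (hw i hi).le
  have hne : ∀ i ∈ u, √(w i) ≠ 0 := fun i hi => (Real.sqrt_pos.2 (hw i hi)).ne'
  calc ∑ i ∈ u, p i * q i = ∑ i ∈ u, p i * √(w i) * (q i / √(w i)) :=
        Finset.sum_congr rfl fun i hi => by field_simp [hne i hi]
    _ ≤ _ := hcs
    _ = _ := by
        congr 2 <;> refine Finset.sum_congr rfl fun i hi => ?_
        · rw [mul_pow, hsq i hi]
        · rw [div_pow, hsq i hi]

lemma ofReal_two_pi_mul_sum_le_lintegral {r : ℝ} (hr : 1 < r) {f : ℂ → ℂ} {a : ℤ → ℂ}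
    (ha : ∀ z ∈ annulus r, HasSum (fun n : ℤ => a n * z ^ n) (f z)) (u : Finset ℤ) :
    ENNReal.ofReal (2 * π * ∑ n ∈ u, ‖a n‖ ^ 2 * laurentI n r) ≤
      ∫⁻ w in annulus r, ENNReal.ofReal ((1 - ‖w‖ ^ 2) ^ 2 * ‖f w‖ ^ 2) := by
  have hK : ∀ ε ∈ Ioo 0 ((r - 1) / 2),
      ENNReal.ofReal (2 * π * ∑ n ∈ u, ‖a n‖ ^ 2 * (laurentI n (r - ε) - laurentI n (1 + ε))) ≤
        ∫⁻ w in annulus r, ENNReal.ofReal ((1 - ‖w‖ ^ 2) ^ 2 * ‖f w‖ ^ 2) := by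
    rintro ε ⟨hε, hεr⟩
    have hsub := closedAnnulus_subset_annulus (s := r - ε) (lt_add_of_pos_right 1 hε)
      (sub_lt_self r hε)
    have hb : ∀ w ∈ closedAnnulus (1 + ε) (r - ε), HasSum (fun n : ℤ => a n * w ^ n) (f w) :=
      fun w hw => ha w (hsub hw)
    have hts : 1 + ε ≤ r - ε := by linarith
    calc _ ≤ ENNReal.ofReal (∫ w in closedAnnulus (1 + ε) (r - ε),
          (1 - ‖w‖ ^ 2) ^ 2 * ‖f w‖ ^ 2) :=
        ENNReal.ofReal_le_ofReal (two_pi_mul_sum_le_integral_of_hasSum (by linarith) hts hb u)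
      _ = ∫⁻ w in closedAnnulus (1 + ε) (r - ε), ENNReal.ofReal ((1 - ‖w‖ ^ 2) ^ 2 * ‖f w‖ ^ 2) :=
        ofReal_integral_eq_lintegral_ofReal
          (integrableOn_weight_mul_sq_norm_of_hasSum (by linarith) hts hb)
          (ae_of_all _ fun _ => by positivity)
      _ ≤ _ := lintegral_mono_set hsub
  have hlim : Tendsto
      (fun ε => 2 * π * ∑ n ∈ u, ‖a n‖ ^ 2 * (laurentI n (r - ε) - laurentI n (1 + ε)))
      (𝓝[>] 0) (𝓝 (2 * π * ∑ n ∈ u, ‖a n‖ ^ 2 * laurentI n r)) := by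
    refine (Tendsto.const_mul _ (tendsto_finsetSum u fun n _ => Tendsto.const_mul _ ?_)).mono_left
      nhdsWithin_le_nhds
    have hcont : ContinuousAt (fun ε => laurentI n (r - ε) - laurentI n (1 + ε)) 0 :=
      ((continuousAt_laurentI n (by linarith)).comp_of_eq (by fun_prop) (sub_zero r)).sub
        ((continuousAt_laurentI n one_pos).comp_of_eq (by fun_prop) (add_zero 1))
    simpa [laurentI_one] using hcont.tendsto
  exact le_of_tendsto ((ENNReal.continuous_ofReal.tendsto _).comp hlim)
    (eventually_of_mem (Ioo_mem_nhdsGT (by linarith)) hK)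

theorem stmt1_general (r : ℝ) (hr : 1 < r) (f : ℂ → ℂ) (a : ℤ → ℂ)
    (ha : ∀ z ∈ annulus r, HasSum (fun n : ℤ => a n * z ^ n) (f z))
    (z : ℂ) (hz : z ∈ annulus r)
    (hsum : Summable (fun n : ℤ => ‖z‖ ^ (2 * n) / laurentI n r)) :
    ENNReal.ofReal ‖f z‖ ≤
      ENNReal.ofReal (1 / Real.sqrt (2 * Real.pi)) *
        (∫⁻ w in annulus r, ENNReal.ofReal ((1 - ‖w‖ ^ 2) ^ 2 * ‖f w‖ ^ 2)) ^ (1/2 : ℝ) *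
        ENNReal.ofReal (Real.sqrt (∑' n : ℤ, ‖z‖ ^ (2 * n) / laurentI n r)) := by
  have hI : ∀ n, 0 < laurentI n r := fun n => laurentI_pos n hr
  rw [ofReal_norm, ← (ha z hz).tsum_eq]
  refine enorm_tsum_le_tsum_enorm.trans (ENNReal.summable.tsum_le_of_sum_le fun u => ?_)
  have hz2 : ∀ n : ℤ, (‖z‖ ^ n) ^ 2 = ‖z‖ ^ (2 * n) := fun n => by
    rw [← zpow_natCast, ← zpow_mul, mul_comm]; rfl
  have hA : √(∑ n ∈ u, ‖a n‖ ^ 2 * laurentI n r) =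
      1 / √(2 * π) * √(2 * π * ∑ n ∈ u, ‖a n‖ ^ 2 * laurentI n r) := by
    rw [Real.sqrt_mul (by positivity : (0 : ℝ) ≤ 2 * π), one_div,
      inv_mul_cancel_left₀ (by positivity)]
  calc ∑ n ∈ u, ‖a n * z ^ n‖ₑ = ENNReal.ofReal (∑ n ∈ u, ‖a n‖ * ‖z‖ ^ n) := by
        rw [ENNReal.ofReal_sum_of_nonneg fun n _ => by positivity]
        simp_rw [← ofReal_norm, norm_mul, norm_zpow]
    _ ≤ ENNReal.ofReal (√(∑ n ∈ u, ‖a n‖ ^ 2 * laurentI n r) *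
          √(∑ n ∈ u, (‖z‖ ^ n) ^ 2 / laurentI n r)) :=
        ENNReal.ofReal_le_ofReal (sum_mul_le_sqrt_mul_sqrt_of_pos u _ _ _ fun n _ => hI n)
    _ ≤ ENNReal.ofReal (1 / √(2 * π)) *
          ENNReal.ofReal (2 * π * ∑ n ∈ u, ‖a n‖ ^ 2 * laurentI n r) ^ (1 / 2 : ℝ) *
          ENNReal.ofReal (√(∑' n : ℤ, ‖z‖ ^ (2 * n) / laurentI n r)) := by
        rw [hA, ENNReal.ofReal_mul (by positivity), ENNReal.ofReal_mul (by positivity),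
          ENNReal.ofReal_rpow_of_nonneg (mul_nonneg (by positivity) (Finset.sum_nonneg
            fun n _ => mul_nonneg (sq_nonneg _) (hI n).le)) (by norm_num), ← Real.sqrt_eq_rpow]
        gcongr
        simp_rw [hz2]
        exact hsum.sum_le_tsum u fun n _ => div_nonneg (by positivity) (hI n).le
    _ ≤ _ := by gcongr; exact ofReal_two_pi_mul_sum_le_lintegral hr ha u

/-- Cauchy–Schwarz bound: if `f` is holomorphic on `𝔸_r` with Laurent expansion
`∑ aₙ zⁿ`, then for every `z ∈ 𝔸_r` for which `∑_{n ∈ ℤ} |z|^{2n}/Iₙ(r)` converges,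
`|f(z)| ≤ (1/√(2π)) (∬_{𝔸_r} (1-|w|²)²|f(w)|² dA)^{1/2} (∑ |z|^{2n}/Iₙ(r))^{1/2}`. -/
theorem stmt1 (r : ℝ) (hr : 1 < r) (f : ℂ → ℂ) (a : ℤ → ℂ)
    (hf : DifferentiableOn ℂ f (annulus r))
    (ha : ∀ z ∈ annulus r, HasSum (fun n : ℤ => a n * z ^ n) (f z))
    (z : ℂ) (hz : z ∈ annulus r)
    (hsum : Summable (fun n : ℤ => ‖z‖ ^ (2 * n) / laurentI n r)) :
    ENNReal.ofReal ‖f z‖ ≤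
      ENNReal.ofReal (1 / Real.sqrt (2 * Real.pi)) *
        (∫⁻ w in annulus r, ENNReal.ofReal ((1 - ‖w‖ ^ 2) ^ 2 * ‖f w‖ ^ 2)) ^ (1/2 : ℝ) *
        ENNReal.ofReal (Real.sqrt (∑' n : ℤ, ‖z‖ ^ (2 * n) / laurentI n r)) :=
  stmt1_general r hr f a ha z hz hsum
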